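/- arXiv:1912.11070 — 8 statements merged into one kernel-verified Lean document; each statement's English description precedes it below -/
import Mathlib

section
/- Let H be a real Hilbert space with orthogonal projection P onto a closed subspace, and let f, g ∈ H be nonzero. Set S = ‖Pf‖²/‖f‖² and Ŝ = ‖Pg‖²/‖g‖². Then |S − Ŝ| ≤ (√(S(1−Ŝ)) + √(Ŝ(1−S))) · ‖f − g‖/‖f‖. -/
/-!
Write `a = ‖P f‖`, `b = ‖Pᗮ f‖`, `c = ‖P g‖`, `d = ‖Pᗮ g‖`, so that `‖f‖² = a² + b²` and
`‖g‖² = c² + d²`. Then `S - Ŝ = (ad - bc)(ad + bc) / (‖f‖‖g‖)²` and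
`√(S(1 - Ŝ)) + √(Ŝ(1 - S)) = (ad + bc) / (‖f‖‖g‖)`, so it suffices to show
`|ad - bc| ≤ ‖f - g‖ ‖g‖`. Since `ad - bc = (a - c)d - (b - d)c`, this is Cauchy–Schwarz in `ℝ²`
combined with `|a - c| ≤ ‖P (f - g)‖`, `|b - d| ≤ ‖Pᗮ (f - g)‖` and Pythagoras for `f - g`.
-/

theorem abs_mul_sub_mul_le_sqrt_mul_sqrt (x y z w : ℝ) :
    |x * w - y * z| ≤ √(x ^ 2 + y ^ 2) * √(z ^ 2 + w ^ 2) := by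
  rw [← Real.sqrt_mul (by positivity)]
  exact Real.abs_le_sqrt (by nlinarith [sq_nonneg (x * z + y * w)])

theorem sq_norm_sub_norm_le {E : Type*} [SeminormedAddCommGroup E] (u v : E) :
    (‖u‖ - ‖v‖) ^ 2 ≤ ‖u - v‖ ^ 2 := by
  rw [← sq_abs]
  exact pow_le_pow_left₀ (abs_nonneg _) (abs_norm_sub_norm_le u v) 2

theorem abs_div_sq_sub_div_sq_le {a b c d F G E : ℝ} (ha : 0 ≤ a) (hb : 0 ≤ b) (hc : 0 ≤ c)
    (hd : 0 ≤ d) (hF : 0 < F) (hG : 0 < G) (hF2 : F ^ 2 = a ^ 2 + b ^ 2)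
    (hG2 : G ^ 2 = c ^ 2 + d ^ 2) (h : |a * d - b * c| ≤ E * G) :
    |a ^ 2 / F ^ 2 - c ^ 2 / G ^ 2| ≤
      (√(a ^ 2 / F ^ 2 * (1 - c ^ 2 / G ^ 2)) + √(c ^ 2 / G ^ 2 * (1 - a ^ 2 / F ^ 2))) *
        (E / F) := by
  have hSf : 1 - a ^ 2 / F ^ 2 = b ^ 2 / F ^ 2 := by field_simp; linarith
  have hSg : 1 - c ^ 2 / G ^ 2 = d ^ 2 / G ^ 2 := by field_simp; linarith
  have hsqrt {x y X Y : ℝ} (hx : 0 ≤ x) (hy : 0 ≤ y) (hX : 0 < X) (hY : 0 < Y) :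
      √(x ^ 2 / X ^ 2 * (y ^ 2 / Y ^ 2)) = x * y / (X * Y) := by
    rw [show x ^ 2 / X ^ 2 * (y ^ 2 / Y ^ 2) = (x * y / (X * Y)) ^ 2 by ring]
    exact Real.sqrt_sq (by positivity)
  have hdiff : a ^ 2 / F ^ 2 - c ^ 2 / G ^ 2 = (a * d - b * c) * (a * d + b * c) / (F * G) ^ 2 := by
    field_simp
    linear_combination a ^ 2 * hG2 - c ^ 2 * hF2
  rw [hSf, hSg, hsqrt ha hd hF hG, hsqrt hc hb hG hF, hdiff, abs_div, abs_mul,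
    abs_of_nonneg (by positivity : 0 ≤ a * d + b * c), abs_of_pos (by positivity : 0 < (F * G) ^ 2)]
  calc |a * d - b * c| * (a * d + b * c) / (F * G) ^ 2
      ≤ E * G * (a * d + b * c) / (F * G) ^ 2 := by gcongr
    _ = (a * d / (F * G) + c * b / (G * F)) * (E / F) := by field_simp

namespace Submodule

variable {E : Type*} [NormedAddCommGroup E] [InnerProductSpace ℝ E]
  (K : Submodule ℝ E) [K.HasOrthogonalProjection]

theorem norm_eq_sqrt_norm_starProjection_sq_add (x : E) :
    ‖x‖ = √(‖K.starProjection x‖ ^ 2 + ‖Kᗮ.starProjection x‖ ^ 2) := by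
  rw [← norm_sq_eq_add_norm_sq_starProjection, Real.sqrt_sq (norm_nonneg x)]

theorem abs_norm_starProjection_mul_sub_le (f g : E) :
    |‖K.starProjection f‖ * ‖Kᗮ.starProjection g‖ - ‖Kᗮ.starProjection f‖ * ‖K.starProjection g‖|
      ≤ ‖f - g‖ * ‖g‖ := by
  set a := ‖K.starProjection f‖
  set b := ‖Kᗮ.starProjection f‖
  set c := ‖K.starProjection g‖
  set d := ‖Kᗮ.starProjection g‖
  have hfg : √((a - c) ^ 2 + (b - d) ^ 2) ≤ ‖f - g‖ := by
    rw [K.norm_eq_sqrt_norm_starProjection_sq_add (f - g), map_sub, map_sub]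
    exact Real.sqrt_le_sqrt (add_le_add (sq_norm_sub_norm_le _ _) (sq_norm_sub_norm_le _ _))
  calc |a * d - b * c| = |(a - c) * d - (b - d) * c| := by congr 1; ring
    _ ≤ √((a - c) ^ 2 + (b - d) ^ 2) * √(c ^ 2 + d ^ 2) :=
        abs_mul_sub_mul_le_sqrt_mul_sqrt _ _ _ _
    _ ≤ ‖f - g‖ * ‖g‖ := by
        rw [← K.norm_eq_sqrt_norm_starProjection_sq_add g]
        gcongr

end Submodule

theorem stmt_3_general {H : Type*} [NormedAddCommGroup H] [InnerProductSpace ℝ H]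
    (K : Submodule ℝ H) [CompleteSpace K]
    (f g : H) (hf : f ≠ 0) (hg : g ≠ 0)
    (S Shat : ℝ)
    (hS : S = ‖(K.orthogonalProjectionOnto f : H)‖ ^ 2 / ‖f‖ ^ 2)
    (hShat : Shat = ‖(K.orthogonalProjectionOnto g : H)‖ ^ 2 / ‖g‖ ^ 2) :
    |S - Shat| ≤ (Real.sqrt (S * (1 - Shat)) + Real.sqrt (Shat * (1 - S))) * (‖f - g‖ / ‖f‖) := by
  subst hS hShat
  exact abs_div_sq_sub_div_sq_le (norm_nonneg _) (norm_nonneg _) (norm_nonneg _) (norm_nonneg _)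
    (norm_pos_iff.mpr hf) (norm_pos_iff.mpr hg) (K.norm_sq_eq_add_norm_sq_starProjection f)
    (K.norm_sq_eq_add_norm_sq_starProjection g) (K.abs_norm_starProjection_mul_sub_le f g)

theorem stmt_3 {H : Type*} [NormedAddCommGroup H] [InnerProductSpace ℝ H] [CompleteSpace H]
    (K : Submodule ℝ H) [CompleteSpace K]
    (f g : H) (hf : f ≠ 0) (hg : g ≠ 0)
    (S Shat : ℝ)
    (hS : S = ‖(K.orthogonalProjectionOnto f : H)‖ ^ 2 / ‖f‖ ^ 2)
    (hShat : Shat = ‖(K.orthogonalProjectionOnto g : H)‖ ^ 2 / ‖g‖ ^ 2) :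
    |S - Shat| ≤ (Real.sqrt (S * (1 - Shat)) + Real.sqrt (Shat * (1 - S))) * (‖f - g‖ / ‖f‖) :=
  stmt_3_general K f g hf hg S Shat hS hShat
end

section
/- Let H be a real Hilbert space with orthogonal projection P onto a closed subspace, and let f, g ∈ H be nonzero. Then |‖Pf‖²/‖f‖² − ‖Pg‖²/‖g‖²| ≤ ‖f − g‖/‖f‖. -/
/-! The ratio `‖P x‖² / ‖x‖²` is the Rayleigh quotient of `P`, and `2 P - 1` is the reflection `R`
in the subspace, a symmetric isometry. For unit vectors `u`, `v` and a symmetric contraction `T`,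
`⟪T u, u⟫ - ⟪T v, v⟫ = ⟪T (u + v), u - v⟫` is at most `‖u + v‖ ‖u - v‖ = 2 sin ∠(u, v)`; applied
to `R` this bounds the change of the ratio by `sin ∠(f, g)`. Finally `‖f‖ sin ∠(f, g)` is the
distance from `f` to the line `ℝ g`, hence at most `‖f - g‖`. -/

open RealInnerProductSpace InnerProductGeometry Real

section

variable {H : Type*} [NormedAddCommGroup H] [InnerProductSpace ℝ H]

theorem norm_add_mul_norm_sub_eq_two_sin_angle {u v : H} (hu : ‖u‖ = 1) (hv : ‖v‖ = 1) :
    ‖u + v‖ * ‖u - v‖ = 2 * sin (angle u v) := by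
  have hsin : sin (angle u v) = √(1 - ⟪u, v⟫ ^ 2) := by
    simpa [real_inner_self_eq_norm_sq, hu, hv, sq] using sin_angle_mul_norm_mul_norm u v
  rw [hsin, ← Real.sqrt_sq (by positivity : (0:ℝ) ≤ ‖u + v‖ * ‖u - v‖),
    ← Real.sqrt_sq (by norm_num : (0:ℝ) ≤ 2), ← Real.sqrt_mul (by norm_num)]
  congr 1
  rw [mul_pow, norm_add_sq_real, norm_sub_sq_real, hu, hv]
  ring

theorem sin_angle_mul_norm_le_norm_sub (x y : H) : sin (angle x y) * ‖x‖ ≤ ‖x - y‖ := by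
  rcases eq_or_ne y 0 with rfl | hy
  · simp
  have hy' : 0 < ‖y‖ := norm_pos_iff.2 hy
  refine le_of_mul_le_mul_right ?_ hy'
  rw [mul_assoc, sin_angle_mul_norm_mul_norm, ← Real.sqrt_sq (by positivity : 0 ≤ ‖x - y‖ * ‖y‖)]
  refine Real.sqrt_le_sqrt ?_
  rw [mul_pow, norm_sub_sq_real, real_inner_self_eq_norm_sq, real_inner_self_eq_norm_sq]
  -- the gap is `(‖y‖ ^ 2 - ⟪x, y⟫) ^ 2`
  nlinarith [sq_nonneg (‖y‖ ^ 2 - ⟪x, y⟫)]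

theorem abs_inner_map_self_sub_le_two_sin_angle {T : H →L[ℝ] H}
    (hT : (T : H →ₗ[ℝ] H).IsSymmetric) (hT1 : ‖T‖ ≤ 1) {u v : H} (hu : ‖u‖ = 1) (hv : ‖v‖ = 1) :
    |⟪T u, u⟫ - ⟪T v, v⟫| ≤ 2 * sin (angle u v) := by
  have hpolar : ⟪T u, u⟫ - ⟪T v, v⟫ = ⟪T (u + v), u - v⟫ := by
    have hvu : ⟪T v, u⟫ = ⟪v, T u⟫ := hT v u
    rw [map_add, inner_add_left, inner_sub_right, inner_sub_right, hvu, real_inner_comm (T u) v]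
    ring
  rw [hpolar, ← norm_add_mul_norm_sub_eq_two_sin_angle hu hv]
  calc |⟪T (u + v), u - v⟫| ≤ ‖T (u + v)‖ * ‖u - v‖ := abs_real_inner_le_norm _ _
    _ ≤ ‖u + v‖ * ‖u - v‖ := by
      gcongr
      simpa using T.le_of_opNorm_le hT1 (u + v)

theorem abs_rayleighQuotient_sub_le_two_sin_angle {T : H →L[ℝ] H}
    (hT : (T : H →ₗ[ℝ] H).IsSymmetric) (hT1 : ‖T‖ ≤ 1) {x y : H} (hx : x ≠ 0) (hy : y ≠ 0) :
    |T.rayleighQuotient x - T.rayleighQuotient y| ≤ 2 * sin (angle x y) := by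
  have hunit {z : H} (hz : z ≠ 0) :
      T.rayleighQuotient z = ⟪T (‖z‖⁻¹ • z), ‖z‖⁻¹ • z⟫ ∧ ‖‖z‖⁻¹ • z‖ = 1 := by
    have hn : ‖(‖z‖⁻¹ : ℝ) • z‖ = 1 := norm_smul_inv_norm hz
    refine ⟨?_, hn⟩
    rw [← T.rayleigh_smul z (inv_ne_zero (norm_ne_zero_iff.2 hz)),
      ContinuousLinearMap.rayleighQuotient, ContinuousLinearMap.reApplyInnerSelf_apply, hn]
    simp
  obtain ⟨hxu, hu⟩ := hunit hx
  obtain ⟨hyv, hv⟩ := hunit hy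
  rw [hxu, hyv, ← angle_smul_left_of_pos x y (inv_pos.2 (norm_pos_iff.2 hx)),
    ← angle_smul_right_of_pos _ y (inv_pos.2 (norm_pos_iff.2 hy))]
  exact abs_inner_map_self_sub_le_two_sin_angle hT hT1 hu hv

namespace Submodule

variable (K : Submodule ℝ H) [K.HasOrthogonalProjection]

theorem reflection_isSymmetric : ((K.reflection : H →L[ℝ] H) : H →ₗ[ℝ] H).IsSymmetric := by
  intro x y
  change ⟪K.reflection x, y⟫ = ⟪x, K.reflection y⟫
  rw [← K.reflection.inner_map_map, reflection_reflection]

theorem norm_reflection_le : ‖(K.reflection : H →L[ℝ] H)‖ ≤ 1 :=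
  ContinuousLinearMap.opNorm_le_bound _ zero_le_one fun x => by simp

theorem rayleighQuotient_starProjection (x : H) :
    K.starProjection.rayleighQuotient x = ‖K.starProjection x‖ ^ 2 / ‖x‖ ^ 2 := by
  rw [ContinuousLinearMap.rayleighQuotient, ContinuousLinearMap.reApplyInnerSelf_apply,
    K.re_inner_starProjection_eq_normSq]
  rfl

theorem rayleighQuotient_reflection {x : H} (hx : x ≠ 0) :
    (K.reflection : H →L[ℝ] H).rayleighQuotient x =
      2 * K.starProjection.rayleighQuotient x - 1 := by
  change ⟪K.reflection x, x⟫ / ‖x‖ ^ 2 = 2 * (⟪K.starProjection x, x⟫ / ‖x‖ ^ 2) - 1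
  rw [reflection_apply, two_smul, inner_sub_left, inner_add_left, real_inner_self_eq_norm_sq]
  field_simp
  ring

theorem abs_rayleighQuotient_starProjection_sub_le {x y : H} (hx : x ≠ 0) (hy : y ≠ 0) :
    |K.starProjection.rayleighQuotient x - K.starProjection.rayleighQuotient y| ≤
      sin (angle x y) := by
  have h := abs_rayleighQuotient_sub_le_two_sin_angle K.reflection_isSymmetric
    K.norm_reflection_le hx hy
  rw [K.rayleighQuotient_reflection hx, K.rayleighQuotient_reflection hy,
    sub_sub_sub_cancel_right, ← mul_sub, abs_mul, abs_two] at h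
  linarith

end Submodule

end

theorem stmt_4_general {H : Type*} [NormedAddCommGroup H] [InnerProductSpace ℝ H]
    (K : Submodule ℝ H) [CompleteSpace K]
    (f g : H) (hf : f ≠ 0) (hg : g ≠ 0) :
    |‖(K.orthogonalProjection f : H)‖ ^ 2 / ‖f‖ ^ 2 -
        ‖(K.orthogonalProjection g : H)‖ ^ 2 / ‖g‖ ^ 2| ≤ ‖f - g‖ / ‖f‖ := by
  simp only [Submodule.coe_orthogonalProjectionOnto_apply, ← K.rayleighQuotient_starProjection]
  calc _ ≤ sin (angle f g) := K.abs_rayleighQuotient_starProjection_sub_le hf hg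
    _ ≤ ‖f - g‖ / ‖f‖ := (le_div_iff₀ (norm_pos_iff.2 hf)).2 (sin_angle_mul_norm_le_norm_sub f g)

theorem stmt_4 {H : Type*} [NormedAddCommGroup H] [InnerProductSpace ℝ H] [CompleteSpace H]
    (K : Submodule ℝ H) [CompleteSpace K]
    (f g : H) (hf : f ≠ 0) (hg : g ≠ 0) :
    |‖(K.orthogonalProjection f : H)‖ ^ 2 / ‖f‖ ^ 2 -
        ‖(K.orthogonalProjection g : H)‖ ^ 2 / ‖g‖ ^ 2| ≤ ‖f - g‖ / ‖f‖ :=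
  stmt_4_general K f g hf hg
end

section
/- Let H be a real Hilbert space with orthogonal projection P onto a closed subspace, and let f, g ∈ H be nonzero with ‖Pf‖²/‖f‖² ∈ {0, 1}. Then |‖Pf‖²/‖f‖² − ‖Pg‖²/‖g‖²| ≤ ‖f − g‖²/‖f‖². -/
/-!
Write `a = ‖P g‖`, `b = ‖(1 - P) g‖`, `c = ‖f‖`. If `P f = 0`, Pythagoras gives
`‖f - g‖² = a² + ‖f - (1 - P) g‖² ≥ a² + (c - b)²`, and the claim `a² / (a² + b²) ≤ ‖f - g‖² / c²`
follows from the identity `(a² + b²)(a² + (c - b)²) - a²c² = (a² - b(c - b))²`.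
The case `‖P f‖ = ‖f‖` is the case `P f = 0` for the complementary projection `1 - P`,
whose index is one minus that of `P`.
-/

open Submodule

theorem sq_mul_sq_le_add_sq_mul_add_sq (a b c : ℝ) :
    a ^ 2 * c ^ 2 ≤ (a ^ 2 + b ^ 2) * (a ^ 2 + (c - b) ^ 2) :=
  calc a ^ 2 * c ^ 2 = (a ^ 2 + b ^ 2) * (a ^ 2 + (c - b) ^ 2) - (a ^ 2 - b * (c - b)) ^ 2 := by
        ring
    _ ≤ (a ^ 2 + b ^ 2) * (a ^ 2 + (c - b) ^ 2) := sub_le_self _ (sq_nonneg _)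

section SobolIndex

variable {H : Type*} [NormedAddCommGroup H] [InnerProductSpace ℝ H]
  (K : Submodule ℝ H) [K.HasOrthogonalProjection]

noncomputable def sobolIndex (x : H) : ℝ :=
  ‖K.starProjection x‖ ^ 2 / ‖x‖ ^ 2

theorem sobolIndex_nonneg (x : H) : 0 ≤ sobolIndex K x := by
  unfold sobolIndex
  positivity

variable {K}

theorem sobolIndex_orthogonal {x : H} (hx : x ≠ 0) :
    sobolIndex Kᗮ x = 1 - sobolIndex K x := by
  have hx2 : ‖x‖ ^ 2 ≠ 0 := by positivity
  rw [sobolIndex, sobolIndex, eq_sub_iff_add_eq, ← add_div, add_comm,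
    ← norm_sq_eq_add_norm_sq_starProjection, div_self hx2]

theorem starProjection_eq_zero_of_sobolIndex_eq_zero {x : H} (hx : x ≠ 0)
    (h : sobolIndex K x = 0) : K.starProjection x = 0 := by
  have hx2 : ‖x‖ ^ 2 ≠ 0 := by positivity
  simpa [sobolIndex, hx2] using h

theorem sobolIndex_le_of_starProjection_eq_zero {f g : H} (hf : f ≠ 0) (hg : g ≠ 0)
    (hPf : K.starProjection f = 0) :
    sobolIndex K g ≤ ‖f - g‖ ^ 2 / ‖f‖ ^ 2 := by
  have hQf : Kᗮ.starProjection f = f := by simp [hPf]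
  have hg2 : ‖g‖ ^ 2 = ‖K.starProjection g‖ ^ 2 + ‖Kᗮ.starProjection g‖ ^ 2 :=
    norm_sq_eq_add_norm_sq_starProjection g K
  have hfg2 : ‖K.starProjection g‖ ^ 2 + (‖f‖ - ‖Kᗮ.starProjection g‖) ^ 2 ≤ ‖f - g‖ ^ 2 := by
    have hQ : (‖f‖ - ‖Kᗮ.starProjection g‖) ^ 2 ≤ ‖f - Kᗮ.starProjection g‖ ^ 2 :=
      sq_le_sq' (abs_le.mp (abs_norm_sub_norm_le _ _)).1 (abs_le.mp (abs_norm_sub_norm_le _ _)).2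
    calc _ ≤ ‖K.starProjection g‖ ^ 2 + ‖f - Kᗮ.starProjection g‖ ^ 2 := by gcongr
      _ = ‖K.starProjection (f - g)‖ ^ 2 + ‖Kᗮ.starProjection (f - g)‖ ^ 2 := by
        rw [map_sub, map_sub, hPf, hQf, zero_sub, norm_neg]
      _ = ‖f - g‖ ^ 2 := (norm_sq_eq_add_norm_sq_starProjection _ K).symm
  rw [sobolIndex, div_le_div_iff₀ (by positivity) (by positivity), hg2]
  calc _ ≤ (‖K.starProjection g‖ ^ 2 + ‖Kᗮ.starProjection g‖ ^ 2) *
        (‖K.starProjection g‖ ^ 2 + (‖f‖ - ‖Kᗮ.starProjection g‖) ^ 2) :=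
      sq_mul_sq_le_add_sq_mul_add_sq _ _ _
    _ ≤ _ := by rw [mul_comm]; gcongr

theorem abs_sobolIndex_sub_le_of_starProjection_eq_zero {f g : H} (hf : f ≠ 0) (hg : g ≠ 0)
    (hPf : K.starProjection f = 0) :
    |sobolIndex K f - sobolIndex K g| ≤ ‖f - g‖ ^ 2 / ‖f‖ ^ 2 := by
  rw [sobolIndex, hPf, norm_zero, zero_pow two_ne_zero, zero_div, zero_sub, abs_neg,
    abs_of_nonneg (sobolIndex_nonneg K g)]
  exact sobolIndex_le_of_starProjection_eq_zero hf hg hPf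

end SobolIndex

theorem stmt_5_general {H : Type*} [NormedAddCommGroup H] [InnerProductSpace ℝ H]
    (K : Submodule ℝ H) [CompleteSpace K]
    (f g : H) (hf : f ≠ 0) (hg : g ≠ 0)
    (hS : ‖(K.orthogonalProjectionOnto f : H)‖ ^ 2 / ‖f‖ ^ 2 = 0 ∨
          ‖(K.orthogonalProjectionOnto f : H)‖ ^ 2 / ‖f‖ ^ 2 = 1) :
    |‖(K.orthogonalProjectionOnto f : H)‖ ^ 2 / ‖f‖ ^ 2 -
        ‖(K.orthogonalProjectionOnto g : H)‖ ^ 2 / ‖g‖ ^ 2| ≤ ‖f - g‖ ^ 2 / ‖f‖ ^ 2 := by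
  change sobolIndex K f = 0 ∨ sobolIndex K f = 1 at hS
  change |sobolIndex K f - sobolIndex K g| ≤ _
  rcases hS with h0 | h1
  · exact abs_sobolIndex_sub_le_of_starProjection_eq_zero hf hg
      (starProjection_eq_zero_of_sobolIndex_eq_zero hf h0)
  · have hQf : sobolIndex Kᗮ f = 0 := by rw [sobolIndex_orthogonal hf, h1, sub_self]
    have h := abs_sobolIndex_sub_le_of_starProjection_eq_zero hf hg
      (starProjection_eq_zero_of_sobolIndex_eq_zero hf hQf)
    rwa [sobolIndex_orthogonal hf, sobolIndex_orthogonal hg, sub_sub_sub_cancel_left,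
      abs_sub_comm] at h

theorem stmt_5 {H : Type*} [NormedAddCommGroup H] [InnerProductSpace ℝ H] [CompleteSpace H]
    (K : Submodule ℝ H) [CompleteSpace K]
    (f g : H) (hf : f ≠ 0) (hg : g ≠ 0)
    (hS : ‖(K.orthogonalProjectionOnto f : H)‖ ^ 2 / ‖f‖ ^ 2 = 0 ∨
          ‖(K.orthogonalProjectionOnto f : H)‖ ^ 2 / ‖f‖ ^ 2 = 1) :
    |‖(K.orthogonalProjectionOnto f : H)‖ ^ 2 / ‖f‖ ^ 2 -
        ‖(K.orthogonalProjectionOnto g : H)‖ ^ 2 / ‖g‖ ^ 2| ≤ ‖f - g‖ ^ 2 / ‖f‖ ^ 2 :=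
  stmt_5_general K f g hf hg hS
end

section
/- Let H be a real Hilbert space with orthogonal projection P onto a closed subspace, let f, g ∈ H be nonzero, and write Q = I − P. Then |‖Pf‖²/‖f‖² − ‖Pg‖²/‖g‖²| + |‖Qf‖²/‖f‖² − ‖Qg‖²/‖g‖²| ≤ 2·‖f − g‖/‖f‖. -/
/-!
With `R = 2P - I` the reflection in `K`, the two differences cancel against each other (since
`‖Pw‖² + ‖Qw‖² = ‖w‖²`), and together they equal the difference of the Rayleigh quotients
`⟪Rf, f⟫ / ‖f‖²` and `⟪Rg, g⟫ / ‖g‖²`. For the unit vectors `u = f / ‖f‖`, `v = g / ‖g‖` and a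
self-adjoint contraction `R`, `⟪Ru, u⟫ - ⟪Rv, v⟫ = ⟪R(u - v), u + v⟫` is at most
`‖u - v‖ ‖u + v‖ = 2 √(1 - ⟪u, v⟫²)`, and `‖f‖ √(1 - ⟪u, v⟫²)`, the distance from `f` to the
line `ℝ g`, is at most `‖f - g‖`.
-/

open scoped RealInnerProductSpace

section RayleighQuotient

variable {H : Type*} [NormedAddCommGroup H] [InnerProductSpace ℝ H]

lemma sq_norm_sub_sq_div_sq_norm_le (f g : H) : ‖f‖ ^ 2 - ⟪f, g⟫ ^ 2 / ‖g‖ ^ 2 ≤ ‖f - g‖ ^ 2 := by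
  rcases eq_or_ne g 0 with rfl | hg
  · simp
  have hG : ‖g‖ ≠ 0 := norm_ne_zero_iff.mpr hg
  have hsq : (⟪f, g⟫ / ‖g‖ - ‖g‖) ^ 2 = ⟪f, g⟫ ^ 2 / ‖g‖ ^ 2 - 2 * ⟪f, g⟫ + ‖g‖ ^ 2 := by
    field_simp; ring
  rw [norm_sub_sq_real]
  linarith [sq_nonneg (⟪f, g⟫ / ‖g‖ - ‖g‖)]

lemma abs_inner_map_self_sub_inner_map_self_le {T : H →ₗ[ℝ] H} (hT : T.IsSymmetric)
    (hT₁ : ∀ x, ‖T x‖ ≤ ‖x‖) (x y : H) :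
    |⟪T x, x⟫ - ⟪T y, y⟫| ≤ ‖x - y‖ * ‖x + y‖ := by
  have key : ⟪T x, x⟫ - ⟪T y, y⟫ = ⟪T (x - y), x + y⟫ := by
    simp only [map_sub, inner_sub_left, inner_add_right, hT x y, real_inner_comm x (T y)]
    ring
  calc |⟪T x, x⟫ - ⟪T y, y⟫| = |⟪T (x - y), x + y⟫| := by rw [key]
    _ ≤ ‖T (x - y)‖ * ‖x + y‖ := abs_real_inner_le_norm _ _
    _ ≤ ‖x - y‖ * ‖x + y‖ := by gcongr; exact hT₁ _

lemma norm_sub_mul_norm_add_normalize_le {f g : H} (hf : f ≠ 0) (hg : g ≠ 0) :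
    ‖‖f‖⁻¹ • f - ‖g‖⁻¹ • g‖ * ‖‖f‖⁻¹ • f + ‖g‖⁻¹ • g‖ ≤ 2 * (‖f - g‖ / ‖f‖) := by
  have hF : 0 < ‖f‖ := norm_pos_iff.mpr hf
  have hG : 0 < ‖g‖ := norm_pos_iff.mpr hg
  have hu : ‖‖f‖⁻¹ • f‖ = 1 := by simpa using norm_smul_inv_norm (𝕜 := ℝ) hf
  have hv : ‖‖g‖⁻¹ • g‖ = 1 := by simpa using norm_smul_inv_norm (𝕜 := ℝ) hg
  set t := ⟪‖f‖⁻¹ • f, ‖g‖⁻¹ • g⟫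
  have ht : t = ⟪f, g⟫ / (‖f‖ * ‖g‖) := by
    simp only [t, real_inner_smul_left, real_inner_smul_right]; field_simp
  have hsub : ‖‖f‖⁻¹ • f - ‖g‖⁻¹ • g‖ ^ 2 = 2 - 2 * t := by
    rw [norm_sub_sq_real, hu, hv]; ring
  have hadd : ‖‖f‖⁻¹ • f + ‖g‖⁻¹ • g‖ ^ 2 = 2 + 2 * t := by
    rw [norm_add_sq_real, hu, hv]; ring
  have hline : ‖f‖ ^ 2 * (1 - t ^ 2) ≤ ‖f - g‖ ^ 2 := by
    have hdist := sq_norm_sub_sq_div_sq_norm_le f g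
    rw [ht]
    field_simp
    field_simp at hdist
    linarith
  rw [← pow_le_pow_iff_left₀ (by positivity) (by positivity) two_ne_zero, mul_pow, hsub, hadd,
    mul_pow, div_pow, mul_div_assoc', le_div_iff₀ (by positivity)]
  nlinarith

lemma inner_map_self_div_sq_norm (T : H →ₗ[ℝ] H) (f : H) :
    ⟪T f, f⟫ / ‖f‖ ^ 2 = ⟪T (‖f‖⁻¹ • f), ‖f‖⁻¹ • f⟫ := by
  simp only [map_smul, real_inner_smul_left, real_inner_smul_right]
  ring

lemma abs_inner_map_self_div_sub_le {T : H →ₗ[ℝ] H} (hT : T.IsSymmetric)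
    (hT₁ : ∀ x, ‖T x‖ ≤ ‖x‖) {f g : H} (hf : f ≠ 0) (hg : g ≠ 0) :
    |⟪T f, f⟫ / ‖f‖ ^ 2 - ⟪T g, g⟫ / ‖g‖ ^ 2| ≤ 2 * (‖f - g‖ / ‖f‖) := by
  rw [inner_map_self_div_sq_norm, inner_map_self_div_sq_norm]
  exact (abs_inner_map_self_sub_inner_map_self_le hT hT₁ _ _).trans
    (norm_sub_mul_norm_add_normalize_le hf hg)

end RayleighQuotient

namespace Submodule

variable {H : Type*} [NormedAddCommGroup H] [InnerProductSpace ℝ H]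
  (K : Submodule ℝ H) [K.HasOrthogonalProjection]

lemma isSymmetric_reflection : (K.reflection : H →ₗ[ℝ] H).IsSymmetric := fun x y => by
  change ⟪K.reflection x, y⟫ = ⟪x, K.reflection y⟫
  rw [K.reflection.inner_map_eq_flip, reflection_symm]

lemma norm_sq_starProjection_add_norm_sq_sub (w : H) :
    ‖K.starProjection w‖ ^ 2 + ‖w - K.starProjection w‖ ^ 2 = ‖w‖ ^ 2 := by
  rw [norm_sq_eq_add_norm_sq_starProjection w K, starProjection_orthogonal']
  rfl

lemma inner_reflection_self (w : H) :
    ⟪K.reflection w, w⟫ = ‖K.starProjection w‖ ^ 2 - ‖w - K.starProjection w‖ ^ 2 := by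
  set p := K.starProjection w
  set q := w - p
  have hR : K.reflection w = p - q := by
    rw [reflection_apply]
    change 2 • p - w = p - (w - p)
    abel
  have hw : w = p + q := (add_sub_cancel p w).symm
  calc ⟪K.reflection w, w⟫ = ⟪p - q, p + q⟫ := by rw [hR, ← hw]
    _ = ‖p‖ ^ 2 - ‖q‖ ^ 2 := by
      rw [inner_sub_left, inner_add_right, inner_add_right, real_inner_self_eq_norm_sq,
        real_inner_self_eq_norm_sq, real_inner_comm p q]
      ring

end Submodule

lemma abs_sub_add_abs_sub_eq_of_add_eq {a a' b b' : ℝ} (h : a + a' = b + b') :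
    |a - b| + |a' - b'| = |(a - a') - (b - b')| := by
  rw [show a' - b' = -(a - b) by linarith, abs_neg, show a - a' - (b - b') = 2 * (a - b) by linarith,
    abs_mul, abs_two]
  ring

theorem stmt_8_general {H : Type*} [NormedAddCommGroup H] [InnerProductSpace ℝ H]
    (K : Submodule ℝ H) [CompleteSpace K]
    (f g : H) (hf : f ≠ 0) (hg : g ≠ 0) :
    |‖(K.orthogonalProjection f : H)‖ ^ 2 / ‖f‖ ^ 2 -
        ‖(K.orthogonalProjection g : H)‖ ^ 2 / ‖g‖ ^ 2| +
      |‖f - (K.orthogonalProjection f : H)‖ ^ 2 / ‖f‖ ^ 2 -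
        ‖g - (K.orthogonalProjection g : H)‖ ^ 2 / ‖g‖ ^ 2| ≤ 2 * (‖f - g‖ / ‖f‖) := by
  simp only [Submodule.orthogonalProjection, Submodule.coe_orthogonalProjectionOnto_apply]
  have hsplit : ∀ w : H, w ≠ 0 →
      ‖K.starProjection w‖ ^ 2 / ‖w‖ ^ 2 + ‖w - K.starProjection w‖ ^ 2 / ‖w‖ ^ 2 = 1 := by
    intro w hw
    rw [← add_div, K.norm_sq_starProjection_add_norm_sq_sub, div_self (by positivity)]
  rw [abs_sub_add_abs_sub_eq_of_add_eq ((hsplit f hf).trans (hsplit g hg).symm), ← sub_div,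
    ← sub_div, ← K.inner_reflection_self, ← K.inner_reflection_self]
  exact abs_inner_map_self_div_sub_le K.isSymmetric_reflection
    (fun x => (K.reflection.norm_map x).le) hf hg

theorem stmt_8 {H : Type*} [NormedAddCommGroup H] [InnerProductSpace ℝ H] [CompleteSpace H]
    (K : Submodule ℝ H) [CompleteSpace K]
    (f g : H) (hf : f ≠ 0) (hg : g ≠ 0) :
    |‖(K.orthogonalProjection f : H)‖ ^ 2 / ‖f‖ ^ 2 -
        ‖(K.orthogonalProjection g : H)‖ ^ 2 / ‖g‖ ^ 2| +
      |‖f - (K.orthogonalProjection f : H)‖ ^ 2 / ‖f‖ ^ 2 -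
        ‖g - (K.orthogonalProjection g : H)‖ ^ 2 / ‖g‖ ^ 2| ≤ 2 * (‖f - g‖ / ‖f‖) :=
  stmt_8_general K f g hf hg
end

section
/- Let S, Ŝ ∈ (0,1) and set δ₁ = √(S·Ŝ) + √((1−S)(1−Ŝ)). In ℝ² with its standard inner product, define f = (√S, √(1−S)) and g = δ₁·(√Ŝ, √(1−Ŝ)). Then ‖f‖ = 1, ‖f − g‖² = 1 − δ₁² = (√(S(1−Ŝ)) − √(Ŝ(1−S)))², the first-coordinate Sobol indices satisfy f₁²/‖f‖² = S and g₁²/‖g‖² = Ŝ, and moreover |S − Ŝ| = (√(S(1−Ŝ)) + √(Ŝ(1−S)))·‖f − g‖/‖f‖. -/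
theorem stmt_9 (S Shat : ℝ) (hS : S ∈ Set.Ioo (0 : ℝ) 1) (hShat : Shat ∈ Set.Ioo (0 : ℝ) 1)
    (δ₁ : ℝ) (hδ₁ : δ₁ = Real.sqrt (S * Shat) + Real.sqrt ((1 - S) * (1 - Shat)))
    (f g : EuclideanSpace ℝ (Fin 2))
    (hf0 : f 0 = Real.sqrt S) (hf1 : f 1 = Real.sqrt (1 - S))
    (hg0 : g 0 = δ₁ * Real.sqrt Shat) (hg1 : g 1 = δ₁ * Real.sqrt (1 - Shat)) :
    ‖f‖ = 1 ∧
    ‖f - g‖ ^ 2 = 1 - δ₁ ^ 2 ∧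
    1 - δ₁ ^ 2 = (Real.sqrt (S * (1 - Shat)) - Real.sqrt (Shat * (1 - S))) ^ 2 ∧
    (f 0) ^ 2 / ‖f‖ ^ 2 = S ∧
    (g 0) ^ 2 / ‖g‖ ^ 2 = Shat ∧
    |S - Shat| =
      (Real.sqrt (S * (1 - Shat)) + Real.sqrt (Shat * (1 - S))) * (‖f - g‖ / ‖f‖) := by
  obtain ⟨hS0, hS1⟩ := hS
  obtain ⟨hT0, hT1⟩ := hShat
  set a := Real.sqrt S with ha
  set b := Real.sqrt (1 - S) with hb
  set c := Real.sqrt Shat with hc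
  set d := Real.sqrt (1 - Shat) with hd
  have ha2 : a ^ 2 = S := Real.sq_sqrt hS0.le
  have hb2 : b ^ 2 = 1 - S := Real.sq_sqrt (by linarith)
  have hc2 : c ^ 2 = Shat := Real.sq_sqrt hT0.le
  have hd2 : d ^ 2 = 1 - Shat := Real.sq_sqrt (by linarith)
  have hapos : 0 < a := Real.sqrt_pos.mpr hS0
  have hbpos : 0 < b := Real.sqrt_pos.mpr (by linarith)
  have hcpos : 0 < c := Real.sqrt_pos.mpr hT0
  have hdpos : 0 < d := Real.sqrt_pos.mpr (by linarith)
  have hδ : δ₁ = a * c + b * d := by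
    rw [hδ₁, Real.sqrt_mul hS0.le, Real.sqrt_mul (by linarith : (0:ℝ) ≤ 1 - S)]
  have hδpos : 0 < δ₁ := by rw [hδ]; positivity
  have hsad : Real.sqrt (S * (1 - Shat)) = a * d := Real.sqrt_mul hS0.le _
  have hsbc : Real.sqrt (Shat * (1 - S)) = c * b := Real.sqrt_mul hT0.le _
  have hnf : ‖f‖ = 1 := by
    rw [EuclideanSpace.norm_eq, Fin.sum_univ_two, hf0, hf1, Real.norm_eq_abs,
      Real.norm_eq_abs, sq_abs, sq_abs, ha2, hb2]
    simpa using Real.sqrt_one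
  have hfg2 : ‖f - g‖ ^ 2 = 1 - δ₁ ^ 2 := by
    rw [EuclideanSpace.norm_eq, Fin.sum_univ_two]
    rw [Real.sq_sqrt (by positivity)]
    have h0 : (f - g) 0 = a - δ₁ * c := by
      simp [hf0, hg0]
    have h1 : (f - g) 1 = b - δ₁ * d := by
      simp [hf1, hg1]
    rw [h0, h1, Real.norm_eq_abs, Real.norm_eq_abs, sq_abs, sq_abs, hδ]
    linear_combination ha2 + hb2 + (a * c + b * d) ^ 2 * (hc2 + hd2)
  have hkey : 1 - δ₁ ^ 2 = (a * d - c * b) ^ 2 := by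
    rw [hδ]; linear_combination (-(c ^ 2 + d ^ 2)) * (ha2 + hb2) - hc2 - hd2
  have hng : ‖g‖ ^ 2 = δ₁ ^ 2 := by
    rw [EuclideanSpace.norm_eq, Fin.sum_univ_two, Real.sq_sqrt (by positivity),
      hg0, hg1, Real.norm_eq_abs, Real.norm_eq_abs, sq_abs, sq_abs]
    linear_combination δ₁ ^ 2 * (hc2 + hd2)
  refine ⟨hnf, hfg2, by rw [hkey, hsad, hsbc], ?_, ?_, ?_⟩
  · rw [hnf, hf0, ha2]; simp
  · rw [hng, hg0]
    field_simp
    nlinarith [hc2]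
  · have hfgnn : ‖f - g‖ = |a * d - c * b| := by
      have hx : ‖f - g‖ ^ 2 = |a * d - c * b| ^ 2 := by
        rw [hfg2, hkey, sq_abs]
      calc ‖f - g‖ = Real.sqrt (‖f - g‖ ^ 2) := (Real.sqrt_sq (norm_nonneg _)).symm
        _ = Real.sqrt (|a * d - c * b| ^ 2) := by rw [hx]
        _ = |a * d - c * b| := Real.sqrt_sq (abs_nonneg _)
    rw [hsad, hsbc, hnf, hfgnn, div_one]
    have : S - Shat = (a * d + c * b) * (a * d - c * b) := by
      linear_combination (-d ^ 2) * ha2 + c ^ 2 * hb2 + (1 - S) * hc2 + (-S) * hd2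
    rw [this, abs_mul, abs_of_pos (by positivity)]
end

section
/- Let (Ω, 𝒫) be a probability space, X : Ω → ℝ with |X| ≤ 1 almost surely, Z : Ω → [0,∞) integrable, c > 0, S ∈ [0,1], and A an event such that Z ≥ c almost surely on A and |X| ≤ Z/c + 2·√S·√(Z/c) almost surely on the complement of A. Then 𝔼|X| ≤ 2·(𝔼[Z]/c) + 2·√S·√(𝔼[Z]/c). -/
/-!
On `A` the trivial bound `|X| ≤ 1 ≤ Z/c` holds, so `|X| ≤ Z/c + 2√S·√(Z/c)` almost everywhere.
Integrating, Jensen's inequality for the concave square root gives `𝔼√(Z/c) ≤ √(𝔼Z/c)`.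
-/

open MeasureTheory

namespace MeasureTheory

variable {Ω : Type*} [MeasurableSpace Ω] {μ : Measure Ω} {g : Ω → ℝ}

lemma Integrable.sqrt [IsFiniteMeasure μ] (hg : Integrable g μ) :
    Integrable (fun ω => √(g ω)) μ := by
  have hmeas : AEStronglyMeasurable (fun ω => √(g ω)) μ :=
    Real.continuous_sqrt.comp_aestronglyMeasurable hg.aestronglyMeasurable
  refine ((memLp_two_iff_integrable_sq hmeas).2 ?_).integrable one_le_two
  simpa only [Real.sq_sqrt'] using hg.pos_part

lemma integral_sqrt_le_sqrt_integral [IsProbabilityMeasure μ] (hg : Integrable g μ)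
    (hg0 : 0 ≤ᵐ[μ] g) : ∫ ω, √(g ω) ∂μ ≤ √(∫ ω, g ω ∂μ) :=
  Real.strictConcaveOn_sqrt.concaveOn.le_map_integral Real.continuous_sqrt.continuousOn
    isClosed_Ici hg0 hg hg.sqrt

lemma integral_le_integral_add_mul_sqrt_integral [IsProbabilityMeasure μ] {Y : Ω → ℝ} {a : ℝ}
    (ha : 0 ≤ a) (hY0 : 0 ≤ᵐ[μ] Y) (hg : Integrable g μ) (hg0 : 0 ≤ᵐ[μ] g)
    (hYg : ∀ᵐ ω ∂μ, Y ω ≤ g ω + a * √(g ω)) :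
    ∫ ω, Y ω ∂μ ≤ ∫ ω, g ω ∂μ + a * √(∫ ω, g ω ∂μ) := by
  have hsqrt : Integrable (fun ω => a * √(g ω)) μ := hg.sqrt.const_mul a
  calc ∫ ω, Y ω ∂μ ≤ ∫ ω, (g ω + a * √(g ω)) ∂μ := integral_mono_of_nonneg hY0 (hg.add hsqrt) hYg
    _ = ∫ ω, g ω ∂μ + a * ∫ ω, √(g ω) ∂μ := by rw [integral_add hg hsqrt, integral_const_mul]
    _ ≤ ∫ ω, g ω ∂μ + a * √(∫ ω, g ω ∂μ) := by
      gcongr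
      exact integral_sqrt_le_sqrt_integral hg hg0

end MeasureTheory

theorem stmt_12_general {Ω : Type*} [MeasurableSpace Ω] (μ : Measure Ω) [IsProbabilityMeasure μ]
    (X Z : Ω → ℝ)
    (hXbdd : ∀ᵐ ω ∂μ, |X ω| ≤ 1)
    (hZnonneg : ∀ᵐ ω ∂μ, 0 ≤ Z ω) (hZint : Integrable Z μ)
    (c : ℝ) (hc : 0 < c)
    (S : ℝ)
    (A : Set Ω)
    (hZA : ∀ᵐ ω ∂μ, ω ∈ A → c ≤ Z ω)
    (hXAc : ∀ᵐ ω ∂μ, ω ∉ A →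
      |X ω| ≤ Z ω / c + 2 * Real.sqrt S * Real.sqrt (Z ω / c)) :
    ∫ ω, |X ω| ∂μ ≤
      2 * ((∫ ω, Z ω ∂μ) / c) + 2 * Real.sqrt S * Real.sqrt ((∫ ω, Z ω ∂μ) / c) := by
  have hg0 : 0 ≤ᵐ[μ] fun ω => Z ω / c := by
    filter_upwards [hZnonneg] with ω h using div_nonneg h hc.le
  have hbound : ∀ᵐ ω ∂μ, |X ω| ≤ Z ω / c + 2 * √S * √(Z ω / c) := by
    filter_upwards [hXbdd, hZA, hXAc] with ω hX hωA hωAc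
    by_cases hω : ω ∈ A
    · have : 1 ≤ Z ω / c := (one_le_div hc).2 (hωA hω)
      have : 0 ≤ 2 * √S * √(Z ω / c) := by positivity
      linarith
    · exact hωAc hω
  have key := integral_le_integral_add_mul_sqrt_integral (by positivity)
    (ae_of_all _ fun ω => abs_nonneg (X ω)) (hZint.div_const c) hg0 hbound
  have hint : ∫ ω, Z ω / c ∂μ = (∫ ω, Z ω ∂μ) / c := integral_div c Z
  have hint0 : 0 ≤ (∫ ω, Z ω ∂μ) / c := hint ▸ integral_nonneg_of_ae hg0
  rw [hint] at key
  linarith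

theorem stmt_12 {Ω : Type*} [MeasurableSpace Ω] (μ : Measure Ω) [IsProbabilityMeasure μ]
    (X Z : Ω → ℝ) (hXmeas : Measurable X) (hZmeas : Measurable Z)
    (hXbdd : ∀ᵐ ω ∂μ, |X ω| ≤ 1)
    (hZnonneg : ∀ᵐ ω ∂μ, 0 ≤ Z ω) (hZint : Integrable Z μ)
    (c : ℝ) (hc : 0 < c)
    (S : ℝ) (hS : S ∈ Set.Icc (0 : ℝ) 1)
    (A : Set Ω) (hA : MeasurableSet A)
    (hZA : ∀ᵐ ω ∂μ, ω ∈ A → c ≤ Z ω)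
    (hXAc : ∀ᵐ ω ∂μ, ω ∉ A →
      |X ω| ≤ Z ω / c + 2 * Real.sqrt S * Real.sqrt (Z ω / c)) :
    ∫ ω, |X ω| ∂μ ≤
      2 * ((∫ ω, Z ω ∂μ) / c) + 2 * Real.sqrt S * Real.sqrt ((∫ ω, Z ω ∂μ) / c) :=
  stmt_12_general μ X Z hXbdd hZnonneg hZint c hc S A hZA hXAc
end

section
/- Let x₁, …, xₙ be i.i.d. random variables with values in a measurable space, e a square-integrable function, and Ψ₁, …, Ψ_N measurable functions with 𝔼[Ψ_j(x₁)·Ψ_k(x₁)] = δ_{jk} and 𝔼[Ψ_j(x₁)·e(x₁)] = 0 for all j, k. If sup_x Σ_{j=1}^N Ψ_j(x)² ≤ K, then 𝔼[ Σ_{j=1}^N ( (1/n) Σ_{i=1}^n Ψ_j(xᵢ)·e(xᵢ) )² ] ≤ (K/n)·𝔼[e(x₁)²]. -/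
/-!
For each `j` the variables `Ψ j (xᵢ) * e (xᵢ)` are i.i.d., centred and square-integrable, so by
additivity of the variance over pairwise independent summands the second moment of their mean is
`1 / n` times that of a single one. Summing over `j` and using `∑ j, Ψ j x ^ 2 ≤ K` pointwise
bounds the total by `K / n * 𝔼[e(x₁)²]`.
-/

open MeasureTheory ProbabilityTheory Finset

lemma memLp_two_of_sq_le {Ω : Type*} [MeasurableSpace Ω] {μ : Measure Ω} {f g : Ω → ℝ}
    (hf : AEStronglyMeasurable f μ) (hg : Integrable g μ) (hfg : ∀ᵐ ω ∂μ, f ω ^ 2 ≤ g ω) :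
    MemLp f 2 μ :=
  (memLp_two_iff_integrable_sq hf).2 <| hg.mono' (hf.pow 2) <| hfg.mono fun ω h => by
    rwa [Real.norm_of_nonneg (sq_nonneg _)]

section SampleMean

variable {Ω ι : Type*} [MeasurableSpace Ω] {μ : Measure Ω} [Fintype ι] {Y : ι → Ω → ℝ}

lemma variance_sum_of_identDistrib (i₀ : ι) (hY : MemLp (Y i₀) 2 μ)
    (hid : ∀ i, IdentDistrib (Y i) (Y i₀) μ μ) (hindep : Pairwise fun i j => Y i ⟂ᵢ[μ] Y j) :
    Var[∑ i, Y i; μ] = Fintype.card ι * Var[Y i₀; μ] := by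
  rw [IndepFun.variance_sum (fun i _ => (hid i).memLp_iff.2 hY)
    (fun i _ j _ hij => hindep hij)]
  simp [(hid _).variance_eq, card_univ]

lemma integral_sq_sampleMean_of_identDistrib [IsFiniteMeasure μ] (i₀ : ι) (hY : MemLp (Y i₀) 2 μ)
    (hid : ∀ i, IdentDistrib (Y i) (Y i₀) μ μ) (hindep : Pairwise fun i j => Y i ⟂ᵢ[μ] Y j)
    (hmean : μ[Y i₀] = 0) :
    ∫ ω, ((Fintype.card ι : ℝ)⁻¹ * ∑ i, Y i ω) ^ 2 ∂μ =
      (Fintype.card ι : ℝ)⁻¹ * ∫ ω, Y i₀ ω ^ 2 ∂μ := by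
  have hYi : ∀ i, MemLp (Y i) 2 μ := fun i => (hid i).memLp_iff.2 hY
  have hsum : MemLp (∑ i, Y i) 2 μ := memLp_finsetSum' _ fun i _ => hYi i
  have hsum_mean : μ[∑ i, Y i] = 0 := by
    simp only [Finset.sum_apply]
    rw [integral_finsetSum _ fun i _ => (hYi i).integrable one_le_two]
    simp [(hid _).integral_eq, hmean]
  have : Nonempty ι := ⟨i₀⟩
  have hcard : (Fintype.card ι : ℝ) ≠ 0 := Nat.cast_ne_zero.2 Fintype.card_ne_zero
  have hvar := variance_sum_of_identDistrib i₀ hY hid hindep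
  rw [variance_of_integral_eq_zero hsum.aemeasurable hsum_mean,
    variance_of_integral_eq_zero hY.aemeasurable hmean] at hvar
  simp only [mul_pow, integral_const_mul, ← Finset.sum_apply, hvar]
  field_simp

end SampleMean

theorem stmt_15_general {Ω : Type*} [MeasurableSpace Ω] (μ : Measure Ω) [IsProbabilityMeasure μ]
    {α : Type*} [MeasurableSpace α]
    (n N : ℕ) (hn : 0 < n)
    (X : Fin n → Ω → α) (hXmeas : ∀ i, Measurable (X i))
    (hindep : iIndepFun X μ)
    (hXid : ∀ i, IdentDistrib (X i) (X ⟨0, hn⟩) μ μ)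
    (e : α → ℝ) (he : Measurable e)
    (heL2 : Integrable (fun ω => e (X ⟨0, hn⟩ ω) ^ 2) μ)
    (Ψ : Fin N → α → ℝ) (hΨmeas : ∀ j, Measurable (Ψ j))
    (hΨe : ∀ j, ∫ ω, Ψ j (X ⟨0, hn⟩ ω) * e (X ⟨0, hn⟩ ω) ∂μ = 0)
    (K : ℝ) (hK : ∀ x, ∑ j, Ψ j x ^ 2 ≤ K) :
    ∫ ω, ∑ j, ((1 / (n : ℝ)) * ∑ i, Ψ j (X i ω) * e (X i ω)) ^ 2 ∂μ ≤
      (K / n) * ∫ ω, e (X ⟨0, hn⟩ ω) ^ 2 ∂μ := by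
  set x₀ := X ⟨0, hn⟩
  have hf : ∀ j, Measurable fun x => Ψ j x * e x := fun j => (hΨmeas j).mul he
  have hsq_le : ∀ x, ∑ j, (Ψ j x * e x) ^ 2 ≤ K * e x ^ 2 := fun x => by
    simpa only [mul_pow, ← sum_mul] using mul_le_mul_of_nonneg_right (hK x) (sq_nonneg (e x))
  have hL2 : ∀ j i, MemLp (fun ω => Ψ j (X i ω) * e (X i ω)) 2 μ := fun j i =>
    ((hXid i).comp (hf j)).memLp_iff.2 <|
      memLp_two_of_sq_le ((hf j).comp (hXmeas _)).aestronglyMeasurable (heL2.const_mul K) <|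
        .of_forall fun ω => (single_le_sum (f := fun k => (Ψ k (x₀ ω) * e (x₀ ω)) ^ 2)
          (fun k _ => sq_nonneg _) (mem_univ j)).trans (hsq_le _)
  have hterm : ∀ j, ∫ ω, ((1 / (n : ℝ)) * ∑ i, Ψ j (X i ω) * e (X i ω)) ^ 2 ∂μ =
      (1 / (n : ℝ)) * ∫ ω, (Ψ j (x₀ ω) * e (x₀ ω)) ^ 2 ∂μ := fun j => by
    simpa using integral_sq_sampleMean_of_identDistrib (Y := fun i ω => Ψ j (X i ω) * e (X i ω))
      ⟨0, hn⟩ (hL2 j _) (fun i => (hXid i).comp (hf j))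
      (fun i i' hii' => (hindep.indepFun hii').comp (hf j) (hf j)) (hΨe j)
  have hint : ∀ j, Integrable (fun ω => ((1 / (n : ℝ)) * ∑ i, Ψ j (X i ω) * e (X i ω)) ^ 2) μ :=
    fun j => ((memLp_finsetSum univ fun i _ => hL2 j i).const_mul (1 / (n : ℝ))).integrable_sq
  calc ∫ ω, ∑ j, ((1 / (n : ℝ)) * ∑ i, Ψ j (X i ω) * e (X i ω)) ^ 2 ∂μ
      = (1 / (n : ℝ)) * ∫ ω, ∑ j, (Ψ j (x₀ ω) * e (x₀ ω)) ^ 2 ∂μ := by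
        rw [integral_finsetSum _ fun j _ => hint j, sum_congr rfl fun j _ => hterm j,
          integral_finsetSum _ fun j _ => (hL2 j _).integrable_sq, mul_sum]
    _ ≤ (1 / (n : ℝ)) * ∫ ω, K * e (x₀ ω) ^ 2 ∂μ :=
        mul_le_mul_of_nonneg_left (integral_mono (integrable_finsetSum _ fun j _ =>
          (hL2 j _).integrable_sq) (heL2.const_mul K) fun ω => hsq_le (x₀ ω)) (by positivity)
    _ = (K / n) * ∫ ω, e (x₀ ω) ^ 2 ∂μ := by
        rw [integral_const_mul]
        ring

theorem stmt_15 {Ω : Type*} [MeasurableSpace Ω] (μ : Measure Ω) [IsProbabilityMeasure μ]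
    {α : Type*} [MeasurableSpace α]
    (n N : ℕ) (hn : 0 < n)
    (X : Fin n → Ω → α) (hXmeas : ∀ i, Measurable (X i))
    (hindep : iIndepFun X μ)
    (hXid : ∀ i, IdentDistrib (X i) (X ⟨0, hn⟩) μ μ)
    (e : α → ℝ) (he : Measurable e)
    (heL2 : Integrable (fun ω => e (X ⟨0, hn⟩ ω) ^ 2) μ)
    (Ψ : Fin N → α → ℝ) (hΨmeas : ∀ j, Measurable (Ψ j))
    (hΨon : ∀ j k, ∫ ω, Ψ j (X ⟨0, hn⟩ ω) * Ψ k (X ⟨0, hn⟩ ω) ∂μ = if j = k then 1 else 0)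
    (hΨe : ∀ j, ∫ ω, Ψ j (X ⟨0, hn⟩ ω) * e (X ⟨0, hn⟩ ω) ∂μ = 0)
    (K : ℝ) (hK : ∀ x, ∑ j, Ψ j x ^ 2 ≤ K) :
    ∫ ω, ∑ j, ((1 / (n : ℝ)) * ∑ i, Ψ j (X i ω) * e (X i ω)) ^ 2 ∂μ ≤
      (K / n) * ∫ ω, e (X ⟨0, hn⟩ ω) ^ 2 ∂μ :=
  stmt_15_general μ n N hn X hXmeas hindep hXid e he heL2 Ψ hΨmeas hΨe K hK
end

section
/- Let H be a real Hilbert space with orthogonal projection P onto a closed subspace, let f, g ∈ H be nonzero, set S = ‖Pf‖²/‖f‖², Ŝ = ‖Pg‖²/‖g‖², and ε = ‖f − g‖/‖f‖. Then |S − Ŝ| ≤ min(1, ε + 2√S) · ε. -/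
/-!
Normalising `f`, `g` to unit vectors `u`, `v` makes `S = ‖P u‖²` and `Ŝ = ‖P v‖²`; both bounds
are controlled by the sine `√(1 - ⟪u, v⟫²)` of the angle between `u` and `v`, which is at most `ε`
since `ε ‖f‖` is the distance from `f` to a point of the line through `g`.
Splitting `v = ⟪u, v⟫ u + w` with `‖w‖` that sine gives `|‖P u‖ - ‖P v‖| ≤ ε`, hence
`|S - Ŝ| ≤ (ε + 2 √S) ε`. For `|S - Ŝ| ≤ ε`, use that `R = 2P - 1` is a self-adjoint isometry:
`2 (‖P u‖² - ‖P v‖²) = ⟪R (u - v), u + v⟫`, of absolute value at most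
`‖u - v‖ ‖u + v‖ = 2 √(1 - ⟪u, v⟫²)`.
-/

open RealInnerProductSpace

section InnerProductSpace

variable {H : Type*} [NormedAddCommGroup H] [InnerProductSpace ℝ H]

section UnitVectors

variable {u v : H}

lemma norm_sub_real_inner_smul_eq_sqrt (hu : ‖u‖ = 1) (hv : ‖v‖ = 1) :
    ‖v - ⟪u, v⟫ • u‖ = √(1 - ⟪u, v⟫ ^ 2) := by
  rw [← Real.sqrt_sq (norm_nonneg _), norm_sub_sq_real, real_inner_smul_right, norm_smul,
    real_inner_comm, hu, hv, Real.norm_eq_abs, mul_one, sq_abs]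
  congr 1
  ring

lemma one_sub_real_inner_sq_le_norm_sub_smul_sq (hu : ‖u‖ = 1) (hv : ‖v‖ = 1) (t : ℝ) :
    1 - ⟪u, v⟫ ^ 2 ≤ ‖u - t • v‖ ^ 2 := by
  rw [norm_sub_sq_real, real_inner_smul_right, norm_smul, hu, hv, Real.norm_eq_abs, mul_one,
    sq_abs]
  nlinarith [sq_nonneg (t - ⟪u, v⟫)]

lemma norm_sub_mul_norm_add_div_two_eq_sqrt (hu : ‖u‖ = 1) (hv : ‖v‖ = 1) :
    ‖u - v‖ * ‖u + v‖ / 2 = √(1 - ⟪u, v⟫ ^ 2) := by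
  rw [← Real.sqrt_sq (by positivity : 0 ≤ ‖u - v‖ * ‖u + v‖ / 2), div_pow, mul_pow,
    norm_sub_sq_real, norm_add_sq_real, hu, hv]
  congr 1
  ring

end UnitVectors

lemma sqrt_one_sub_real_inner_sq_le_norm_sub_div {f g : H} (hf : f ≠ 0) (hg : g ≠ 0) :
    √(1 - ⟪‖f‖⁻¹ • f, ‖g‖⁻¹ • g⟫ ^ 2) ≤ ‖f - g‖ / ‖f‖ := by
  have hdiff : ‖f‖⁻¹ • f - (‖g‖ / ‖f‖) • ‖g‖⁻¹ • g = ‖f‖⁻¹ • (f - g) := by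
    rw [smul_smul, smul_sub]
    congr 2
    field_simp [norm_ne_zero_iff.mpr hg]
  have hnorm : ‖f - g‖ / ‖f‖ = ‖‖f‖⁻¹ • f - (‖g‖ / ‖f‖) • ‖g‖⁻¹ • g‖ := by
    rw [hdiff, norm_smul, norm_inv, norm_norm, inv_mul_eq_div]
  have hu : ‖‖f‖⁻¹ • f‖ = 1 := norm_smul_inv_norm hf
  have hv : ‖‖g‖⁻¹ • g‖ = 1 := norm_smul_inv_norm hg
  rw [hnorm, ← Real.sqrt_sq (norm_nonneg (_ - _))]
  exact Real.sqrt_le_sqrt (one_sub_real_inner_sq_le_norm_sub_smul_sq hu hv _)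

namespace Submodule

variable (K : Submodule ℝ H) [K.HasOrthogonalProjection]

lemma real_inner_starProjection_self (x : H) :
    ⟪K.starProjection x, x⟫ = ‖K.starProjection x‖ ^ 2 := by
  rw [← real_inner_self_eq_norm_sq, ← K.inner_starProjection_left_eq_right,
    starProjection_eq_self_iff.mpr (K.starProjection_apply_mem x)]

lemma real_inner_reflection_self (x : H) :
    ⟪K.reflection x, x⟫ = 2 * ‖K.starProjection x‖ ^ 2 - ‖x‖ ^ 2 := by
  rw [reflection_apply, two_smul, inner_sub_left, inner_add_left, real_inner_starProjection_self,
    real_inner_self_eq_norm_sq]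
  ring

lemma real_inner_reflection_comm (x y : H) : ⟪K.reflection x, y⟫ = ⟪K.reflection y, x⟫ := by
  rw [reflection_apply, reflection_apply, two_smul, two_smul, inner_sub_left, inner_sub_left,
    inner_add_left, inner_add_left, K.inner_starProjection_left_eq_right, real_inner_comm x,
    real_inner_comm x y]

lemma abs_norm_starProjection_sq_sub_le {u v : H} (h : ‖u‖ = ‖v‖) :
    |‖K.starProjection u‖ ^ 2 - ‖K.starProjection v‖ ^ 2| ≤ ‖u - v‖ * ‖u + v‖ / 2 := by
  have key : 2 * (‖K.starProjection u‖ ^ 2 - ‖K.starProjection v‖ ^ 2) =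
      ⟪K.reflection (u - v), u + v⟫ := by
    rw [map_sub, inner_sub_left, inner_add_right, inner_add_right, real_inner_reflection_self,
      real_inner_reflection_self, real_inner_reflection_comm K u v, h]
    ring
  have hle : |⟪K.reflection (u - v), u + v⟫| ≤ ‖u - v‖ * ‖u + v‖ := by
    simpa only [LinearIsometryEquiv.norm_map] using
      abs_real_inner_le_norm (K.reflection (u - v)) (u + v)
  rw [← key, abs_mul, abs_two] at hle
  linarith

lemma norm_starProjection_le_add (u v : H) (t : ℝ) :
    ‖K.starProjection v‖ ≤ |t| * ‖K.starProjection u‖ + ‖v - t • u‖ :=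
  calc ‖K.starProjection v‖ = ‖t • K.starProjection u + K.starProjection (v - t • u)‖ := by
        rw [map_sub, map_smul, add_sub_cancel]
    _ ≤ |t| * ‖K.starProjection u‖ + ‖v - t • u‖ := by
        grw [norm_add_le, norm_smul, Real.norm_eq_abs, K.norm_starProjection_apply_le (v - t • u)]

lemma norm_starProjection_inv_norm_smul (x : H) :
    ‖K.starProjection (‖x‖⁻¹ • x)‖ = ‖K.starProjection x‖ / ‖x‖ := by
  rw [map_smul, norm_smul, norm_inv, norm_norm, inv_mul_eq_div]

variable {u v : H}

lemma abs_norm_starProjection_sub_le_sqrt (hu : ‖u‖ = 1) (hv : ‖v‖ = 1) :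
    |‖K.starProjection u‖ - ‖K.starProjection v‖| ≤ √(1 - ⟪u, v⟫ ^ 2) := by
  have hc : |⟪u, v⟫| ≤ 1 := by simpa [hu, hv] using abs_real_inner_le_norm u v
  have hvu := K.norm_starProjection_le_add u v ⟪u, v⟫
  have huv := K.norm_starProjection_le_add v u ⟪v, u⟫
  rw [norm_sub_real_inner_smul_eq_sqrt hu hv] at hvu
  rw [norm_sub_real_inner_smul_eq_sqrt hv hu, real_inner_comm] at huv
  have := norm_nonneg (K.starProjection u)
  have := norm_nonneg (K.starProjection v)
  rw [abs_sub_le_iff]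
  constructor <;> nlinarith

lemma abs_norm_starProjection_sq_sub_le_sqrt (hu : ‖u‖ = 1) (hv : ‖v‖ = 1) :
    |‖K.starProjection u‖ ^ 2 - ‖K.starProjection v‖ ^ 2| ≤ √(1 - ⟪u, v⟫ ^ 2) :=
  norm_sub_mul_norm_add_div_two_eq_sqrt hu hv ▸
    K.abs_norm_starProjection_sq_sub_le (hu.trans hv.symm)

end Submodule

end InnerProductSpace

lemma abs_sq_sub_sq_le_min_mul {a b ε : ℝ} (ha : 0 ≤ a) (hab : |a - b| ≤ ε)
    (hsq : |a ^ 2 - b ^ 2| ≤ ε) : |a ^ 2 - b ^ 2| ≤ min 1 (ε + 2 * a) * ε := by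
  rcases min_cases 1 (ε + 2 * a) with ⟨hmin, -⟩ | ⟨hmin, -⟩
  · rwa [hmin, one_mul]
  · have hsum : |a + b| ≤ ε + 2 * a := by
      rw [abs_le] at hab ⊢
      constructor <;> linarith
    calc |a ^ 2 - b ^ 2| = |a - b| * |a + b| := by rw [← abs_mul, mul_comm, ← sq_sub_sq]
      _ ≤ ε * (ε + 2 * a) := mul_le_mul hab hsum (abs_nonneg _) ((abs_nonneg _).trans hab)
      _ = min 1 (ε + 2 * a) * ε := by rw [hmin, mul_comm]

theorem stmt_19_general {H : Type*} [NormedAddCommGroup H] [InnerProductSpace ℝ H]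
    (K : Submodule ℝ H) [CompleteSpace K]
    (f g : H) (hf : f ≠ 0) (hg : g ≠ 0)
    (S Shat ε : ℝ)
    (hS : S = ‖(K.orthogonalProjection f : H)‖ ^ 2 / ‖f‖ ^ 2)
    (hShat : Shat = ‖(K.orthogonalProjection g : H)‖ ^ 2 / ‖g‖ ^ 2)
    (hε : ε = ‖f - g‖ / ‖f‖) :
    |S - Shat| ≤ min 1 (ε + 2 * Real.sqrt S) * ε := by
  have hu : ‖‖f‖⁻¹ • f‖ = 1 := norm_smul_inv_norm hf
  have hv : ‖‖g‖⁻¹ • g‖ = 1 := norm_smul_inv_norm hg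
  have hsin := sqrt_one_sub_real_inner_sq_le_norm_sub_div hf hg
  simp only [Submodule.coe_orthogonalProjectionOnto_apply, ← div_pow,
    ← K.norm_starProjection_inv_norm_smul] at hS hShat
  subst hS hShat hε
  rw [Real.sqrt_sq (norm_nonneg _)]
  exact abs_sq_sub_sq_le_min_mul (norm_nonneg _)
    ((K.abs_norm_starProjection_sub_le_sqrt hu hv).trans hsin)
    ((K.abs_norm_starProjection_sq_sub_le_sqrt hu hv).trans hsin)

theorem stmt_19 {H : Type*} [NormedAddCommGroup H] [InnerProductSpace ℝ H] [CompleteSpace H]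
    (K : Submodule ℝ H) [CompleteSpace K]
    (f g : H) (hf : f ≠ 0) (hg : g ≠ 0)
    (S Shat ε : ℝ)
    (hS : S = ‖(K.orthogonalProjection f : H)‖ ^ 2 / ‖f‖ ^ 2)
    (hShat : Shat = ‖(K.orthogonalProjection g : H)‖ ^ 2 / ‖g‖ ^ 2)
    (hε : ε = ‖f - g‖ / ‖f‖) :
    |S - Shat| ≤ min 1 (ε + 2 * Real.sqrt S) * ε :=
  stmt_19_general K f g hf hg S Shat ε hS hShat hε
end
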